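/- For every α > 0, every compact set K ⊆ ℝ and every ε > 0, there exist L ∈ ℕ₊, parameters k₁, …, k_L > 0 and affine maps t₀, t₁, …, t_L : ℝ → ℝ such that the width-1 ELU network Φ = t_L ∘ ELU_{k_L} ∘ t_{L−1} ∘ ⋯ ∘ ELU_{k₁} ∘ t₀ satisfies sup_{x ∈ K} |Φ(x) − LeakyReLU_α(x)| < ε. That is, LeakyReLU_α can be approximated uniformly on compact subsets of ℝ by compositions of scalar affine maps and ELU activations. -/

import Mathlib

noncomputable def leakyReLU (β : ℝ) (x : ℝ) : ℝ := if 0 ≤ x then x else β * x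
noncomputable def eLU (β : ℝ) (x : ℝ) : ℝ := if 0 ≤ x then x else β * (Real.exp x - 1)

/-- The width-1 scalar network `t_L ∘ σ_{L-1} ∘ t_{L-1} ∘ ⋯ ∘ σ_0 ∘ t_0`, where
`t_i(x) = w i * x + b i` and `σ i` is the activation applied after the `i`-th affine map. -/
noncomputable def scalarNet (σ : ℕ → ℝ → ℝ) (w b : ℕ → ℝ) : ℕ → ℝ → ℝ
  | 0 => fun x => w 0 * x + b 0
  | (L + 1) => fun x => w (L + 1) * σ L (scalarNet σ w b L x) + b (L + 1)

/-- `LeakyReLU_α` (`α > 0`) is approximated uniformly on every compact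
`K ⊆ ℝ` by width-1 networks built from scalar affine maps and ELU activations
`ELU_{k₁}, …, ELU_{k_L}` with positive parameters. -/
theorem leaky_approx_by_width1_elu (α : ℝ) (hα : 0 < α)
    (K : Set ℝ) (hK : IsCompact K) (ε : ℝ) (hε : 0 < ε) :
    ∃ (L : ℕ) (ks w b : ℕ → ℝ), 0 < L ∧ (∀ i, 0 < ks i) ∧
      ∀ x ∈ K, |scalarNet (fun i => eLU (ks i)) w b L x - leakyReLU α x| < ε := by
  obtain ⟨M, hM⟩ := hK.isBounded.exists_norm_le
  set M' : ℝ := max M 1 with hM'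
  have hM'1 : (1:ℝ) ≤ M' := le_max_right _ _
  have hM'0 : (0:ℝ) < M' := lt_of_lt_of_le one_pos hM'1
  set c : ℝ := min (1 / M') (ε / (2 * α * M' ^ 2)) with hc
  have hc0 : 0 < c := lt_min (by positivity) (by positivity)
  refine ⟨1, fun _ => α, fun i => if i = 0 then c else 1 / c, fun _ => 0, one_pos,
    fun _ => hα, fun x hx => ?_⟩
  have hxM : |x| ≤ M' := le_trans (hM x hx) (le_max_left _ _)
  have hcx : |c * x| ≤ 1 := by
    rw [abs_mul, abs_of_pos hc0]
    calc c * |x| ≤ (1 / M') * M' := by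
          apply mul_le_mul (min_le_left _ _) hxM (abs_nonneg x) (by positivity)
      _ = 1 := by field_simp
  simp only [scalarNet, eLU, leakyReLU, mul_zero, add_zero]
  norm_num
  rcases le_or_gt 0 x with hx0 | hx0
  · have h1 : 0 ≤ c * x := by positivity
    rw [if_pos h1, if_pos hx0]
    have : c⁻¹ * (c * x) - x = 0 := by field_simp; ring
    rw [this, abs_zero]; exact hε
  · have h1 : ¬ (0 ≤ c * x) := by
      push_neg; exact mul_neg_of_pos_of_neg hc0 hx0
    rw [if_neg h1, if_neg (not_le.mpr hx0)]
    have key : |Real.exp (c * x) - 1 - c * x| ≤ (c * x) ^ 2 :=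
      Real.abs_exp_sub_one_sub_id_le hcx
    have heq : c⁻¹ * (α * (Real.exp (c * x) - 1)) - α * x
        = (α / c) * (Real.exp (c * x) - 1 - c * x) := by field_simp
    rw [heq, abs_mul, abs_of_pos (by positivity : (0:ℝ) < α / c)]
    calc α / c * |Real.exp (c * x) - 1 - c * x| ≤ α / c * (c * x) ^ 2 := by
          apply mul_le_mul_of_nonneg_left key (by positivity)
      _ = α * c * x ^ 2 := by field_simp
      _ ≤ α * (ε / (2 * α * M' ^ 2)) * M' ^ 2 := by
          apply mul_le_mul
          · exact mul_le_mul_of_nonneg_left (min_le_right _ _) hα.le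
          · calc x ^ 2 = |x| ^ 2 := (sq_abs x).symm
              _ ≤ M' ^ 2 := by apply pow_le_pow_left₀ (abs_nonneg x) hxM
          · positivity
          · positivity
      _ = ε / 2 := by field_simp
      _ < ε := by linarith
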